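/- Assume the boundary case β_t + γ̇_t = 0 for all t ∈ [0, T]. Then f_t := −ε_t⁻¹(A_t + λ_t B_t) = 0 and h_t := −ε_t⁻¹(D_t + λ_t E_t) = 0 for all t ∈ [0, T], while g_t := −ε_t⁻¹(B_t + λ_t C_t) < 0 for all t ∈ [0, T): the optimal trading speed depends only on the current impact state and not on the outstanding position or the in-flow. -/

import Mathlib

/-!
Write `φ = A + λB`, `ψ = D + λE`, `χ = B + λC` and `c = ε⁻¹(φ + λχ)`. In the boundary case
`λ̇ = -βλ`, and the Riccati system closes on these combinations:
`φ̇ = cφ`, `ψ̇ = (c + θ)ψ - θφ`, `χ̇ = (c + β)χ - β`.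
Since `φ_T = ψ_T = 0` and `c`, `θ` are bounded, Grönwall gives `φ ≡ 0` and then `ψ ≡ 0`.
Since `χ_T = 0` and `χ̇ = -β < 0` wherever `χ` vanishes, `χ` can only cross zero downwards
in forward time, so `χ > 0` on `[0, T)`, i.e. `g < 0`.
-/

open Set MeasureTheory Matrix

/-- Market parameters: time horizon `T > 0` and bounded measurable coefficient functions
`β, λ, ε, θ, σ : [0,T] → ℝ` with `β > 0`, `σ ≥ 0`, `λ` and `ε` positive and bounded away
from zero, `λ` differentiable with bounded derivative `lam'`, and the no-arbitrage
condition `2β_t + γ̇_t > 0` where `γ = log λ` (so `γ̇ = λ'/λ`). -/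
structure Params where
  T : ℝ
  beta : ℝ → ℝ
  lam : ℝ → ℝ
  lam' : ℝ → ℝ
  eps : ℝ → ℝ
  theta : ℝ → ℝ
  sigma : ℝ → ℝ
  hT : 0 < T
  hbeta_meas : Measurable beta
  htheta_meas : Measurable theta
  hsigma_meas : Measurable sigma
  heps_meas : Measurable eps
  hbeta_bdd : ∃ M, ∀ t ∈ Icc 0 T, |beta t| ≤ M
  htheta_bdd : ∃ M, ∀ t ∈ Icc 0 T, |theta t| ≤ M
  hsigma_bdd : ∃ M, ∀ t ∈ Icc 0 T, |sigma t| ≤ M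
  hbeta_pos : ∀ t ∈ Icc 0 T, 0 < beta t
  hsigma_nonneg : ∀ t ∈ Icc 0 T, 0 ≤ sigma t
  heps_lb : ∃ c, 0 < c ∧ ∀ t ∈ Icc 0 T, c ≤ eps t
  heps_ub : ∃ M, ∀ t ∈ Icc 0 T, eps t ≤ M
  hlam_lb : ∃ c, 0 < c ∧ ∀ t ∈ Icc 0 T, c ≤ lam t
  hlam_ub : ∃ M, ∀ t ∈ Icc 0 T, lam t ≤ M
  hlam_deriv : ∀ t, HasDerivAt lam (lam' t) t
  hlam'_bdd : ∃ M, ∀ t, |lam' t| ≤ M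
  hnoarb : ∀ t ∈ Icc 0 T, 0 < 2 * beta t + lam' t / lam t

/-- `γ̇_t = λ'_t / λ_t`, the derivative of `γ = log λ`. -/
noncomputable def gammaDot (P : Params) (t : ℝ) : ℝ := P.lam' t / P.lam t

/-- The backward Riccati ODE system on `[0,T]` with its terminal conditions. -/
def IsRiccatiSol (P : Params) (A B C D E F K : ℝ → ℝ) : Prop :=
  (∀ t ∈ Icc (0:ℝ) P.T,
      HasDerivAt A ((P.eps t)⁻¹ * (A t + P.lam t * B t) ^ 2) t) ∧
  A P.T = P.lam P.T ∧
  (∀ t ∈ Icc (0:ℝ) P.T,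
      HasDerivAt B ((P.eps t)⁻¹ * (A t + P.lam t * B t) * (B t + P.lam t * C t)
        + P.beta t * B t) t) ∧
  B P.T = -1 ∧
  (∀ t ∈ Icc (0:ℝ) P.T,
      HasDerivAt C ((P.eps t)⁻¹ * (B t + P.lam t * C t) ^ 2 + 2 * P.beta t * C t
        - (P.lam t)⁻¹ * (2 * P.beta t + gammaDot P t)) t) ∧
  C P.T = (P.lam P.T)⁻¹ ∧
  (∀ t ∈ Icc (0:ℝ) P.T,
      HasDerivAt D ((P.eps t)⁻¹ * (A t + P.lam t * B t) * (D t + P.lam t * E t)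
        - P.theta t * (A t - D t)) t) ∧
  D P.T = 0 ∧
  (∀ t ∈ Icc (0:ℝ) P.T,
      HasDerivAt E ((P.eps t)⁻¹ * (B t + P.lam t * C t) * (D t + P.lam t * E t)
        - P.theta t * (B t - E t) + P.beta t * E t) t) ∧
  E P.T = 0 ∧
  (∀ t ∈ Icc (0:ℝ) P.T,
      HasDerivAt F ((P.eps t)⁻¹ * (D t + P.lam t * E t) ^ 2
        - 2 * P.theta t * (D t - F t)) t) ∧
  F P.T = 0 ∧
  (∀ t ∈ Icc (0:ℝ) P.T,
      HasDerivAt K (-(P.sigma t) ^ 2 * (A t - 2 * D t + F t) / 2) t) ∧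
  K P.T = 0


theorem eq_zero_of_hasDerivAt_mul_self_of_eq_zero_at_end {f k : ℝ → ℝ} {K a b : ℝ}
    (hf : ∀ x ∈ Icc a b, HasDerivAt f (k x * f x) x) (hk : ∀ x ∈ Icc a b, |k x| ≤ K)
    (hb : f b = 0) : ∀ x ∈ Icc a b, f x = 0 := by
  have hrefl : ∀ x ∈ Icc a b, a + b - x ∈ Icc a b := fun x hx =>
    ⟨by linarith [hx.2], by linarith [hx.1]⟩
  have hg : ∀ x ∈ Icc a b,
      HasDerivAt (fun x => f (a + b - x)) (-(k (a + b - x) * f (a + b - x))) x :=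
    fun x hx => (hf _ (hrefl x hx)).comp_const_sub (a + b) x
  have hg0 := eq_zero_of_abs_deriv_le_mul_abs_self_of_eq_zero_right (K := K)
    (fun x hx => (hg x hx).continuousAt.continuousWithinAt)
    (fun x hx => (hg x (Ico_subset_Icc_self hx)).hasDerivWithinAt) (by simpa using hb)
    (fun x hx => by
      rw [Real.norm_eq_abs, abs_neg, abs_mul]
      exact mul_le_mul_of_nonneg_right (hk _ (hrefl x (Ico_subset_Icc_self hx))) (abs_nonneg _))
  intro x hx
  simpa using hg0 _ (hrefl x hx)

theorem pos_of_eq_zero_at_end_of_deriv_neg_at_zeros {f f' : ℝ → ℝ} {a b : ℝ}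
    (hf : ∀ x ∈ Icc a b, HasDerivAt f (f' x) x) (hb : f b = 0)
    (hneg : ∀ x ∈ Icc a b, f x = 0 → f' x < 0) : ∀ x ∈ Ico a b, 0 < f x := by
  have hrefl : ∀ x ∈ Icc a b, a + b - x ∈ Icc a b := fun x hx =>
    ⟨by linarith [hx.2], by linarith [hx.1]⟩
  have hg : ∀ x ∈ Icc a b, HasDerivAt (fun x => -f (a + b - x)) (f' (a + b - x)) x :=
    fun x hx => by simpa using ((hf _ (hrefl x hx)).comp_const_sub (a + b) x).fun_neg
  have hnonneg : ∀ x ∈ Icc a b, 0 ≤ f x := by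
    have := image_le_of_deriv_right_lt_deriv_boundary (B := fun _ => 0) (B' := fun _ => 0)
      (fun x hx => (hg x hx).continuousAt.continuousWithinAt)
      (fun x hx => (hg x (Ico_subset_Icc_self hx)).hasDerivWithinAt) (by simp [hb])
      (fun _ => hasDerivAt_const _ _)
      (fun x hx hx0 => hneg _ (hrefl x (Ico_subset_Icc_self hx)) (neg_eq_zero.1 hx0))
    intro x hx
    simpa using this (hrefl x hx)
  intro x hx
  refine (hnonneg x (Ico_subset_Icc_self hx)).lt_of_ne' fun hx0 => ?_
  -- a zero with negative derivative would make `f` negative just to its right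
  have hsign := eventually_nhdsWithin_sign_eq_of_deriv_neg
    ((hf x (Ico_subset_Icc_self hx)).deriv ▸ hneg x (Ico_subset_Icc_self hx) hx0) hx0
  obtain ⟨y, hy, hxy⟩ :=
    ((hsign.filter_mono nhdsWithin_le_nhds).and (Ioo_mem_nhdsGT hx.2)).exists
  have hfy : f y < 0 := by
    rw [← sign_eq_neg_one_iff, hy, sign_eq_neg_one_iff, sub_neg]
    exact hxy.1
  exact hfy.not_ge (hnonneg y ⟨hx.1.trans hxy.1.le, hxy.2.le⟩)

namespace Params

variable (P : Params) {t : ℝ}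

theorem lam_pos (ht : t ∈ Icc 0 P.T) : 0 < P.lam t := by
  obtain ⟨c, hc, hc_le⟩ := P.hlam_lb
  exact hc.trans_le (hc_le t ht)

theorem eps_pos (ht : t ∈ Icc 0 P.T) : 0 < P.eps t := by
  obtain ⟨c, hc, hc_le⟩ := P.heps_lb
  exact hc.trans_le (hc_le t ht)

theorem lam'_eq_of_beta_add_gammaDot_eq_zero (h : P.beta t + gammaDot P t = 0)
    (ht : t ∈ Icc 0 P.T) : P.lam' t = -(P.beta t * P.lam t) := by
  have := P.lam_pos ht
  rw [gammaDot] at h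
  field_simp at h
  linarith

end Params

/-- In terms of the feedback coefficients, `riccatiCoeff P A B C t = -(f_t + λ_t g_t)`. -/
noncomputable def riccatiCoeff (P : Params) (A B C : ℝ → ℝ) (t : ℝ) : ℝ :=
  (P.eps t)⁻¹ * ((A t + P.lam t * B t) + P.lam t * (B t + P.lam t * C t))

namespace IsRiccatiSol

variable {P : Params} {A B C D E F K : ℝ → ℝ} {t : ℝ}

theorem exists_abs_riccatiCoeff_le (hsol : IsRiccatiSol P A B C D E F K) :
    ∃ L, ∀ t ∈ Icc 0 P.T, |riccatiCoeff P A B C t| ≤ L := by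
  obtain ⟨hA, -, hB, -, hC, -⟩ := hsol
  obtain ⟨c, hc, hc_le⟩ := P.heps_lb
  have hcont : ContinuousOn
      (fun t => (A t + P.lam t * B t) + P.lam t * (B t + P.lam t * C t)) (Icc 0 P.T) := by
    have hA : ContinuousOn A (Icc 0 P.T) := fun t ht => (hA t ht).continuousAt.continuousWithinAt
    have hB : ContinuousOn B (Icc 0 P.T) := fun t ht => (hB t ht).continuousAt.continuousWithinAt
    have hC : ContinuousOn C (Icc 0 P.T) := fun t ht => (hC t ht).continuousAt.continuousWithinAt
    have hlam : Continuous P.lam :=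
      continuous_iff_continuousAt.2 fun t => (P.hlam_deriv t).continuousAt
    fun_prop
  obtain ⟨M, hM⟩ := isCompact_Icc.exists_bound_of_continuousOn hcont
  refine ⟨c⁻¹ * M, fun t ht => ?_⟩
  rw [riccatiCoeff, abs_mul, abs_inv, abs_of_pos (P.eps_pos ht)]
  exact mul_le_mul (inv_anti₀ hc (hc_le t ht)) (hM t ht) (abs_nonneg _) (inv_nonneg.2 hc.le)

theorem hasDerivAt_A_add_lam_mul_B (hsol : IsRiccatiSol P A B C D E F K)
    (h : P.beta t + gammaDot P t = 0) (ht : t ∈ Icc 0 P.T) :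
    HasDerivAt (fun u => A u + P.lam u * B u)
      (riccatiCoeff P A B C t * (A t + P.lam t * B t)) t := by
  obtain ⟨hA, -, hB, -⟩ := hsol
  refine ((hA t ht).add ((P.hlam_deriv t).mul (hB t ht))).congr_deriv ?_
  rw [riccatiCoeff, P.lam'_eq_of_beta_add_gammaDot_eq_zero h ht]
  ring

theorem hasDerivAt_D_add_lam_mul_E (hsol : IsRiccatiSol P A B C D E F K)
    (h : P.beta t + gammaDot P t = 0) (ht : t ∈ Icc 0 P.T) :
    HasDerivAt (fun u => D u + P.lam u * E u)
      ((riccatiCoeff P A B C t + P.theta t) * (D t + P.lam t * E t)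
        - P.theta t * (A t + P.lam t * B t)) t := by
  obtain ⟨-, -, -, -, -, -, hD, -, hE, -⟩ := hsol
  refine ((hD t ht).add ((P.hlam_deriv t).mul (hE t ht))).congr_deriv ?_
  rw [riccatiCoeff, P.lam'_eq_of_beta_add_gammaDot_eq_zero h ht]
  ring

theorem hasDerivAt_B_add_lam_mul_C (hsol : IsRiccatiSol P A B C D E F K)
    (h : P.beta t + gammaDot P t = 0) (ht : t ∈ Icc 0 P.T) :
    HasDerivAt (fun u => B u + P.lam u * C u)
      ((riccatiCoeff P A B C t + P.beta t) * (B t + P.lam t * C t) - P.beta t) t := by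
  obtain ⟨-, -, hB, -, hC, -⟩ := hsol
  refine ((hB t ht).add ((P.hlam_deriv t).mul (hC t ht))).congr_deriv ?_
  have hlam := (P.lam_pos ht).ne'
  rw [riccatiCoeff, P.lam'_eq_of_beta_add_gammaDot_eq_zero h ht, eq_neg_of_add_eq_zero_right h]
  field_simp
  ring

end IsRiccatiSol

/-- In the boundary case `β_t + γ̇_t = 0` on `[0,T]`, one has
`f_t := −ε_t⁻¹(A_t + λ_t B_t) = 0` and `h_t := −ε_t⁻¹(D_t + λ_t E_t) = 0` on `[0,T]`,
while `g_t := −ε_t⁻¹(B_t + λ_t C_t) < 0` on `[0,T)`. -/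
theorem feedback_boundary_case (P : Params)
    (hbdry : ∀ t ∈ Icc (0:ℝ) P.T, P.beta t + gammaDot P t = 0)
    (A B C D E F K : ℝ → ℝ) (hsol : IsRiccatiSol P A B C D E F K) :
    (∀ t ∈ Icc (0:ℝ) P.T, -(P.eps t)⁻¹ * (A t + P.lam t * B t) = 0) ∧
    (∀ t ∈ Icc (0:ℝ) P.T, -(P.eps t)⁻¹ * (D t + P.lam t * E t) = 0) ∧
    (∀ t ∈ Ico (0:ℝ) P.T, -(P.eps t)⁻¹ * (B t + P.lam t * C t) < 0) := by
  have ⟨_, hAT, _, hBT, _, hCT, _, hDT, _, hET, _⟩ := hsol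
  obtain ⟨L, hL⟩ := hsol.exists_abs_riccatiCoeff_le
  obtain ⟨M, hM⟩ := P.htheta_bdd
  have hφ : ∀ t ∈ Icc 0 P.T, A t + P.lam t * B t = 0 :=
    eq_zero_of_hasDerivAt_mul_self_of_eq_zero_at_end
      (fun t ht => hsol.hasDerivAt_A_add_lam_mul_B (hbdry t ht) ht) hL
      (by rw [hAT, hBT]; ring)
  have hψ : ∀ t ∈ Icc 0 P.T, D t + P.lam t * E t = 0 :=
    eq_zero_of_hasDerivAt_mul_self_of_eq_zero_at_end
      (k := fun t => riccatiCoeff P A B C t + P.theta t)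
      (fun t ht => (hsol.hasDerivAt_D_add_lam_mul_E (hbdry t ht) ht).congr_deriv
        (by rw [hφ t ht]; ring))
      (fun t ht => (abs_add_le _ _).trans (add_le_add (hL t ht) (hM t ht)))
      (by rw [hDT, hET]; ring)
  have hχ : ∀ t ∈ Ico 0 P.T, 0 < B t + P.lam t * C t :=
    pos_of_eq_zero_at_end_of_deriv_neg_at_zeros
      (fun t ht => hsol.hasDerivAt_B_add_lam_mul_C (hbdry t ht) ht)
      (by rw [hBT, hCT, mul_inv_cancel₀ (P.lam_pos ⟨P.hT.le, le_rfl⟩).ne']; ring)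
      (fun t ht h0 => by simpa [h0] using P.hbeta_pos t ht)
  refine ⟨fun t ht => by rw [hφ t ht, mul_zero], fun t ht => by rw [hψ t ht, mul_zero],
    fun t ht => ?_⟩
  have hε := P.eps_pos (Ico_subset_Icc_self ht)
  have hχt := hχ t ht
  rw [neg_mul, neg_neg_iff_pos]
  positivity
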